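/- Simulation of finite by maximal computations: for every maximal probabilistic computation P and every finite probabilistic computation R with the same root, there exists a finite sub-computation Q ⊑ P such that for every normal form C, P(Q,C) ≥ P(R,C) and N(Q,C) ≥ N(R,C), and moreover P_any(Q) ≥ P_any(R) and N_any(Q) ≥ N_any(R). -/

import Mathlib

/-!
Walk down `T`. At a deterministic step `a → t` of `T`, the confluence diagrams push the finite
computation `F` through the step, giving a computation rooted at `t` whose observations of normal
forms dominate those of `F`; at a probabilistic step they give two computations whose weighted
observations dominate those of `F`. Such a projection never increases the weight of `F`, and when
the weight stays the same the path to every normal-form leaf gets a smaller code, an ordinal built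
from the `kdet`-ranks of its nodes (this is where strong normalisation of `kdet` enters). So the
walk stops after finitely many steps, at leaves of `T` or once no normal-form leaf is left, and
the part of `T` it visited is the required `G`.
-/
attribute [local instance] Classical.propDecidable

/-- Finite probabilistic computations: a leaf `[C]`, a unary node `[C, T]`, or a
binary probabilistic node `[(p, q, C), T₁, T₂]`. -/
inductive FT (σ : Type) : Type
  | leaf : σ → FT σ
  | one : σ → FT σ → FT σ
  | two : ℝ → ℝ → σ → FT σ → FT σ → FT σ

variable {σ : Type}

/-- The root of a finite probabilistic computation. -/
def FT.root : FT σ → σ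
  | .leaf c => c
  | .one c _ => c
  | .two _ _ c _ _ => c

/-- Validity of a finite probabilistic computation with respect to a deterministic
step relation `det` and a probabilistic branching relation `branch`
(`branch c (p, d) (q, e)` means `c` branches into `d` with probability `p` and
into `e` with probability `q`). -/
inductive FT.Valid (det : σ → σ → Prop) (branch : σ → ℝ × σ → ℝ × σ → Prop) :
    FT σ → Prop
  | leaf (c : σ) : FT.Valid det branch (.leaf c)
  | one {c : σ} {T : FT σ} : det c T.root → FT.Valid det branch T →
      FT.Valid det branch (.one c T)
  | two {p q : ℝ} {c : σ} {T₁ T₂ : FT σ} :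
      branch c (p, T₁.root) (q, T₂.root) →
      FT.Valid det branch T₁ → FT.Valid det branch T₂ →
      FT.Valid det branch (.two p q c T₁ T₂)

/-- The probability of observing `C` as a leaf of a finite computation. -/
noncomputable def FT.Pr (C : σ) : FT σ → ℝ
  | .leaf d => if d = C then 1 else 0
  | .one _ T => T.Pr C
  | .two p q _ T₁ T₂ => p * T₁.Pr C + q * T₂.Pr C

/-- The number of leaves of a finite computation equal to `C` (in `ℕ ∪ {ℵ₀}`). -/
noncomputable def FT.Nc (C : σ) : FT σ → ℕ∞
  | .leaf d => if d = C then 1 else 0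
  | .one _ T => T.Nc C
  | .two _ _ _ T₁ T₂ => T₁.Nc C + T₂.Nc C

/-- The probability of observing any normal form as a leaf of a finite computation. -/
noncomputable def FT.PrAny (NF : σ → Prop) : FT σ → ℝ
  | .leaf d => if NF d then 1 else 0
  | .one _ T => T.PrAny NF
  | .two p q _ T₁ T₂ => p * T₁.PrAny NF + q * T₂.PrAny NF

/-- The number of normal-form leaves of a finite computation (in `ℕ ∪ {ℵ₀}`). -/
noncomputable def FT.NAny (NF : σ → Prop) : FT σ → ℕ∞
  | .leaf d => if NF d then 1 else 0
  | .one _ T => T.NAny NF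
  | .two _ _ _ T₁ T₂ => T₁.NAny NF + T₂.NAny NF

/-- A finite probabilistic computation is maximal if all its leaves are normal forms. -/
def FT.Maximal (NF : σ → Prop) : FT σ → Prop
  | .leaf c => NF c
  | .one _ T => T.Maximal NF
  | .two _ _ _ T₁ T₂ => T₁.Maximal NF ∧ T₂.Maximal NF

/-- A state is in normal form when no reduction step applies to it. -/
def IsNF (det : σ → σ → Prop) (branch : σ → ℝ × σ → ℝ × σ → Prop) (c : σ) : Prop :=
  (∀ d, ¬ det c d) ∧ ∀ x y, ¬ branch c x y

/-- Possibly infinite probabilistic computations, represented by their (partial)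
labelling of tree positions (lists of booleans: `false` = first/left child,
`true` = right child) together with the pair of probabilities decorating each
binary (measurement) node. -/
structure PT (σ : Type) where
  label : List Bool → Option σ
  pr : List Bool → Option (ℝ × ℝ)

/-- The immediate subtree of a possibly infinite computation in direction `b`. -/
def PT.child (T : PT σ) (b : Bool) : PT σ :=
  ⟨fun l => T.label (b :: l), fun l => T.pr (b :: l)⟩

/-- Validity of a possibly infinite probabilistic computation: every defined node
either is a leaf, or has exactly one child reached by a `det` step, or is a binary
node whose two children are reached by a probabilistic branching. -/
structure PT.Valid (det : σ → σ → Prop) (branch : σ → ℝ × σ → ℝ × σ → Prop)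
    (T : PT σ) : Prop where
  root_isSome : (T.label []).isSome
  none_child : ∀ l, T.label l = none →
    T.label (l ++ [false]) = none ∧ T.label (l ++ [true]) = none ∧ T.pr l = none
  right_imp_left : ∀ l, (T.label (l ++ [true])).isSome → (T.label (l ++ [false])).isSome
  det_step : ∀ l c d, T.label l = some c → T.label (l ++ [false]) = some d →
    T.label (l ++ [true]) = none → T.pr l = none ∧ det c d
  branch_step : ∀ l c, T.label l = some c → (T.pr l).isSome →
    ∃ p q d e, T.pr l = some (p, q) ∧ T.label (l ++ [false]) = some d ∧
      T.label (l ++ [true]) = some e ∧ branch c (p, d) (q, e)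
  pr_of_two : ∀ l, (T.label (l ++ [true])).isSome → (T.pr l).isSome

/-- A possibly infinite computation is maximal if every leaf is a normal form. -/
def PT.Maximal (NF : σ → Prop) (T : PT σ) : Prop :=
  ∀ l c, T.label l = some c → T.label (l ++ [false]) = none → NF c

/-- The sub-computation relation `F ⊑ T`: the finite computation `F` is a finite
truncation of the possibly infinite computation `T`. -/
inductive SubComp : FT σ → PT σ → Prop
  | leaf {c : σ} {T : PT σ} : T.label [] = some c → SubComp (.leaf c) T
  | one {c : σ} {T : PT σ} {F : FT σ} : T.label [] = some c → T.pr [] = none →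
      (T.label [false]).isSome → T.label [true] = none →
      SubComp F (T.child false) → SubComp (.one c F) T
  | two {p q : ℝ} {c : σ} {T : PT σ} {F G : FT σ} : T.label [] = some c →
      T.pr [] = some (p, q) → SubComp F (T.child false) → SubComp G (T.child true) →
      SubComp (.two p q c F G) T

/-- The probability of observing `C` in a possibly infinite computation: the
supremum over all finite sub-computations. -/
noncomputable def PT.Pr (T : PT σ) (C : σ) : ℝ :=
  sSup {x : ℝ | ∃ F : FT σ, SubComp F T ∧ FT.Pr C F = x}

/-- The number of leaves equal to `C` in a possibly infinite computation. -/
noncomputable def PT.Nc (T : PT σ) (C : σ) : ℕ∞ :=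
  sSup {n : ℕ∞ | ∃ F : FT σ, SubComp F T ∧ FT.Nc C F = n}

/-- The probability of observing any normal form in a possibly infinite computation. -/
noncomputable def PT.PrAny (NF : σ → Prop) (T : PT σ) : ℝ :=
  sSup {x : ℝ | ∃ F : FT σ, SubComp F T ∧ FT.PrAny NF F = x}

/-- The number of normal-form leaves of a possibly infinite computation. -/
noncomputable def PT.NAny (NF : σ → Prop) (T : PT σ) : ℕ∞ :=
  sSup {n : ℕ∞ | ∃ F : FT σ, SubComp F T ∧ FT.NAny NF F = n}

namespace FT

def leafCount : FT σ → ℕ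
  | .leaf _ => 1
  | .one _ T => T.leafCount
  | .two _ _ _ T₁ T₂ => T₁.leafCount + T₂.leafCount

theorem leafCount_pos : ∀ R : FT σ, 0 < R.leafCount
  | .leaf _ => Nat.one_pos
  | .one _ T => T.leafCount_pos
  | .two _ _ _ T₁ _ => Nat.add_pos_left T₁.leafCount_pos _

def HasLeaf (P : σ → Prop) : FT σ → Prop
  | .leaf c => P c
  | .one _ T => T.HasLeaf P
  | .two _ _ _ T₁ T₂ => T₁.HasLeaf P ∨ T₂.HasLeaf P

def expect (f : σ → ℝ) : FT σ → ℝ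
  | .leaf c => f c
  | .one _ T => T.expect f
  | .two p q _ T₁ T₂ => p * T₁.expect f + q * T₂.expect f

def count (f : σ → ℕ∞) : FT σ → ℕ∞
  | .leaf c => f c
  | .one _ T => T.count f
  | .two _ _ _ T₁ T₂ => T₁.count f + T₂.count f

theorem pr_eq_expect (C : σ) (R : FT σ) : R.Pr C = R.expect fun d => if d = C then 1 else 0 := by
  induction R <;> simp only [Pr, expect, *]

theorem prAny_eq_expect (NF : σ → Prop) (R : FT σ) :
    R.PrAny NF = R.expect fun d => if NF d then 1 else 0 := by
  induction R <;> simp only [PrAny, expect, *]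

theorem nc_eq_count (C : σ) (R : FT σ) : R.Nc C = R.count fun d => if d = C then 1 else 0 := by
  induction R <;> simp only [Nc, count, *]

theorem nAny_eq_count (NF : σ → Prop) (R : FT σ) :
    R.NAny NF = R.count fun d => if NF d then 1 else 0 := by
  induction R <;> simp only [NAny, count, *]

theorem expect_eq_zero_of_not_hasLeaf {P : σ → Prop} {f : σ → ℝ} (hf : ∀ d, ¬ P d → f d = 0) :
    ∀ {R : FT σ}, ¬ R.HasLeaf P → R.expect f = 0
  | .leaf c, h => hf c h
  | .one _ T, h => expect_eq_zero_of_not_hasLeaf hf (R := T) h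
  | .two _ _ _ T₁ T₂, h => by
    simp only [HasLeaf, not_or] at h
    simp only [expect, expect_eq_zero_of_not_hasLeaf hf h.1, expect_eq_zero_of_not_hasLeaf hf h.2,
      mul_zero, add_zero]

theorem count_eq_zero_of_not_hasLeaf {P : σ → Prop} {f : σ → ℕ∞} (hf : ∀ d, ¬ P d → f d = 0) :
    ∀ {R : FT σ}, ¬ R.HasLeaf P → R.count f = 0
  | .leaf c, h => hf c h
  | .one _ T, h => count_eq_zero_of_not_hasLeaf hf (R := T) h
  | .two _ _ _ T₁ T₂, h => by
    simp only [HasLeaf, not_or] at h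
    simp only [count, count_eq_zero_of_not_hasLeaf hf h.1, count_eq_zero_of_not_hasLeaf hf h.2,
      add_zero]

def Dominated (NF : σ → Prop) (R G : FT σ) : Prop :=
  (∀ f : σ → ℝ, (∀ d, 0 ≤ f d) → (∀ d, ¬ NF d → f d = 0) → R.expect f ≤ G.expect f) ∧
    ∀ f : σ → ℕ∞, (∀ d, ¬ NF d → f d = 0) → R.count f ≤ G.count f

namespace Dominated

variable {NF : σ → Prop} {R G H : FT σ}

theorem of_eq (he : ∀ f, R.expect f = G.expect f) (hc : ∀ f, R.count f = G.count f) :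
    R.Dominated NF G :=
  ⟨fun f _ _ => (he f).le, fun f _ => (hc f).le⟩

theorem refl (R : FT σ) : R.Dominated NF R :=
  of_eq (fun _ => rfl) fun _ => rfl

theorem trans (h : R.Dominated NF G) (h' : G.Dominated NF H) : R.Dominated NF H :=
  ⟨fun f hf hs => (h.1 f hf hs).trans (h'.1 f hf hs), fun f hs => (h.2 f hs).trans (h'.2 f hs)⟩

theorem two_mono {p q : ℝ} (hp : 0 ≤ p) (hq : 0 ≤ q) (a b : σ) {R₁ R₂ G₁ G₂ : FT σ}
    (h₁ : R₁.Dominated NF G₁) (h₂ : R₂.Dominated NF G₂) :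
    (FT.two p q a R₁ R₂).Dominated NF (.two p q b G₁ G₂) :=
  ⟨fun f hf hs => add_le_add (mul_le_mul_of_nonneg_left (h₁.1 f hf hs) hp)
      (mul_le_mul_of_nonneg_left (h₂.1 f hf hs) hq),
    fun f hs => add_le_add (h₁.2 f hs) (h₂.2 f hs)⟩

theorem of_not_hasLeaf (hR : ¬ R.HasLeaf NF) (hG : ∀ f : σ → ℝ, (∀ d, 0 ≤ f d) → 0 ≤ G.expect f) :
    R.Dominated NF G :=
  ⟨fun f hf hs => (expect_eq_zero_of_not_hasLeaf hs hR).trans_le (hG f hf),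
    fun _ hs => (count_eq_zero_of_not_hasLeaf hs hR).trans_le bot_le⟩

theorem pr_le (h : R.Dominated NF G) {C : σ} (hC : NF C) : R.Pr C ≤ G.Pr C := by
  rw [pr_eq_expect, pr_eq_expect]
  exact h.1 _ (fun _ => by split_ifs <;> norm_num) fun d hd => if_neg fun (e : d = C) => hd (e ▸ hC)

theorem nc_le (h : R.Dominated NF G) {C : σ} (hC : NF C) : R.Nc C ≤ G.Nc C := by
  rw [nc_eq_count, nc_eq_count]
  exact h.2 _ fun d hd => if_neg fun (e : d = C) => hd (e ▸ hC)

theorem prAny_le (h : R.Dominated NF G) : R.PrAny NF ≤ G.PrAny NF := by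
  rw [prAny_eq_expect, prAny_eq_expect]
  exact h.1 _ (fun _ => by split_ifs <;> norm_num) fun _ hd => if_neg hd

theorem nAny_le (h : R.Dominated NF G) : R.NAny NF ≤ G.NAny NF := by
  rw [nAny_eq_count, nAny_eq_count]
  exact h.2 _ fun _ hd => if_neg hd

theorem interchange {p₀ p₁ s₀ s₁ : ℝ} {t u : Bool → Bool → ℝ}
    (h : ∀ i j, (bif i then p₁ else p₀) * t i j = (bif j then s₁ else s₀) * u i j)
    (a a' b₀ b₁ c₀ c₁ : σ) (A₀ A₁ B₀ B₁ : FT σ) :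
    (FT.two p₀ p₁ a (.two (t false false) (t false true) b₀ A₀ A₁)
      (.two (t true false) (t true true) b₁ B₀ B₁)).Dominated NF
    (.two s₀ s₁ a' (.two (u false false) (u true false) c₀ A₀ B₀)
      (.two (u false true) (u true true) c₁ A₁ B₁)) := by
  refine of_eq (fun f => ?_) fun f => ?_
  · simp only [expect]
    linear_combination (norm := skip) A₀.expect f * h false false + A₁.expect f * h false true +
      B₀.expect f * h true false + B₁.expect f * h true true
    simp only [cond_false, cond_true]
    ring
  · simp only [count]
    exact add_add_add_comm _ _ _ _

end Dominated

theorem eq_leaf_of_isNF {det : σ → σ → Prop} {branch : σ → ℝ × σ → ℝ × σ → Prop} {R : FT σ}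
    (hR : R.Valid det branch) (h : IsNF det branch R.root) : R = .leaf R.root := by
  cases hR with
  | leaf => rfl
  | one hd => exact absurd hd (h.1 _)
  | two hb => exact absurd hb (h.2 _ _)

end FT

namespace PT

variable {det : σ → σ → Prop} {branch : σ → ℝ × σ → ℝ × σ → Prop} {T : PT σ}

theorem Valid.child (hT : T.Valid det branch) {b : Bool} (hb : (T.label [b]).isSome) :
    (T.child b).Valid det branch where
  root_isSome := hb
  none_child l h := hT.none_child (b :: l) h
  right_imp_left l h := hT.right_imp_left (b :: l) h
  det_step l c d := hT.det_step (b :: l) c d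
  branch_step l c := hT.branch_step (b :: l) c
  pr_of_two l h := hT.pr_of_two (b :: l) h

theorem Maximal.child {NF : σ → Prop} (hT : T.Maximal NF) (b : Bool) : (T.child b).Maximal NF :=
  fun l c => hT (b :: l) c

theorem Valid.root_cases (hT : T.Valid det branch) {a : σ} (ha : T.label [] = some a) :
    T.label [false] = none ∨
      (∃ c, T.pr [] = none ∧ T.label [false] = some c ∧ T.label [true] = none ∧ det a c) ∨
      ∃ p q d e, T.pr [] = some (p, q) ∧ T.label [false] = some d ∧ T.label [true] = some e ∧
        branch a (p, d) (q, e) := by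
  rcases (T.label [false]).eq_none_or_eq_some with hc | ⟨c, hc⟩
  · exact Or.inl hc
  rcases (T.pr []).eq_none_or_eq_some with hpr | ⟨pq, hpr⟩
  · have htrue : T.label [true] = none := by
      by_contra h
      simpa [hpr] using hT.pr_of_two [] (Option.ne_none_iff_isSome.1 h)
    exact Or.inr (Or.inl ⟨c, hpr, hc, htrue, (hT.det_step [] a c ha hc htrue).2⟩)
  · obtain ⟨p, q, d, e, hpq, hd, he, hb⟩ := hT.branch_step [] a ha (by simp [hpr])
    exact Or.inr (Or.inr ⟨p, q, d, e, hpq, hd, he, hb⟩)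

end PT

/-- `kdet` is the commutative sub-relation of the deterministic steps `det = ndet ∨ kdet`. -/
structure ConfluentPRS (σ : Type) where
  ndet : σ → σ → Prop
  kdet : σ → σ → Prop
  branch : σ → ℝ × σ → ℝ × σ → Prop
  branch_nonneg : ∀ {a p b q c}, branch a (p, b) (q, c) → 0 ≤ p ∧ 0 ≤ q
  kdet_kdet : ∀ {a b c}, kdet a b → kdet a c → b = c ∨ ∃ d, kdet b d ∧ kdet c d
  kdet_ndet : ∀ {a b c}, kdet a b → ndet a c → ndet b c ∨ ∃ d, ndet b d ∧ kdet c d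
  kdet_branch : ∀ {a b p c q d}, kdet a b → branch a (p, c) (q, d) →
    ∃ c' d', branch b (p, c') (q, d') ∧ kdet c c' ∧ kdet d d'
  ndet_ndet : ∀ {a b c}, ndet a b → ndet a c → b = c ∨ ∃ d, ndet b d ∧ ndet c d
  ndet_branch : ∀ {a b p c q d}, ndet a b → branch a (p, c) (q, d) →
    ∃ c' d', branch b (p, c') (q, d') ∧ (ndet c c' ∨ kdet c c') ∧ (ndet d d' ∨ kdet d d')
  branch_branch : ∀ {a p₀ b₀ p₁ b₁ s₀ c₀ s₁ c₁},
    branch a (p₀, b₀) (p₁, b₁) → branch a (s₀, c₀) (s₁, c₁) →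
    ((p₀, b₀) = (s₀, c₀) ∧ (p₁, b₁) = (s₁, c₁)) ∨
    ∃ (d : Bool → Bool → σ) (t u : Bool → Bool → ℝ),
      branch b₀ (t false false, d false false) (t false true, d false true) ∧
      branch b₁ (t true false, d true false) (t true true, d true true) ∧
      branch c₀ (u false false, d false false) (u true false, d true false) ∧
      branch c₁ (u false true, d false true) (u true true, d true true) ∧
      ∀ i j, (bif i then p₁ else p₀) * t i j = (bif j then s₁ else s₀) * u i j
  kdet_wf : WellFounded (flip kdet)

namespace ConfluentPRS

variable (S : ConfluentPRS σ)

def det (a b : σ) : Prop := S.ndet a b ∨ S.kdet a b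

def NF : σ → Prop := IsNF S.det S.branch

theorem det_diamond {a b t : σ} (hab : S.det a b) (hat : S.det a t) :
    b = t ∨ (S.kdet a b ∧ S.det b t) ∨ (S.kdet a t ∧ S.det t b ∧ (S.kdet a b → S.kdet t b)) ∨
      ∃ e, S.det b e ∧ S.det t e ∧ (S.kdet a b → S.kdet t e) := by
  by_cases hk : S.kdet a b
  · rcases hat with hn' | hk'
    · rcases S.kdet_ndet hk hn' with h | ⟨e, hbe, hte⟩
      · exact Or.inr (Or.inl ⟨hk, Or.inl h⟩)
      · exact Or.inr (Or.inr (Or.inr ⟨e, Or.inl hbe, Or.inr hte, fun _ => hte⟩))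
    · rcases S.kdet_kdet hk hk' with h | ⟨e, hbe, hte⟩
      · exact Or.inl h
      · exact Or.inr (Or.inr (Or.inr ⟨e, Or.inr hbe, Or.inr hte, fun _ => hte⟩))
  · have hn : S.ndet a b := hab.resolve_right hk
    rcases hat with hn' | hk'
    · rcases S.ndet_ndet hn hn' with h | ⟨e, hbe, hte⟩
      · exact Or.inl h
      · exact Or.inr (Or.inr (Or.inr ⟨e, Or.inl hbe, Or.inl hte, (absurd · hk)⟩))
    · rcases S.kdet_ndet hk' hn with h | ⟨e, hte, hbe⟩
      · exact Or.inr (Or.inr (Or.inl ⟨hk', Or.inl h, (absurd · hk)⟩))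
      · exact Or.inr (Or.inr (Or.inr ⟨e, Or.inr hbe, Or.inl hte, (absurd · hk)⟩))

theorem branch_det_diamond {a t b c : σ} {p q : ℝ} (hat : S.det a t)
    (hb : S.branch a (p, b) (q, c)) :
    ∃ b' c', S.branch t (p, b') (q, c') ∧ S.det b b' ∧ S.det c c' ∧
      (S.kdet a t → S.kdet b b' ∧ S.kdet c c') := by
  by_cases hk : S.kdet a t
  · obtain ⟨b', c', hb', h₁, h₂⟩ := S.kdet_branch hk hb
    exact ⟨b', c', hb', Or.inr h₁, Or.inr h₂, fun _ => ⟨h₁, h₂⟩⟩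
  · obtain ⟨b', c', hb', h₁, h₂⟩ := S.ndet_branch (hat.resolve_right hk) hb
    exact ⟨b', c', hb', h₁, h₂, (absurd · hk)⟩

noncomputable def rank (a : σ) : Ordinal.{0} := (S.kdet_wf.apply a).rank

theorem rank_lt {a b : σ} (h : S.kdet a b) : S.rank b < S.rank a :=
  Acc.rank_lt_of_rel (S.kdet_wf.apply a) h

noncomputable def base : Ordinal.{0} := ⨆ a, S.rank a + 1

theorem rank_lt_base (a : σ) : S.rank a < S.base :=
  Ordinal.lt_iSup_add_one _ a

/-- Puts a node `a` on top of the code `e` of a path below it: the code of a path reads the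
`kdet`-ranks of its nodes as digits in base `S.base`, the deepest node being most significant. -/
noncomputable def code (a : σ) (e : Ordinal.{0}) : Ordinal.{0} := S.base * e + S.rank a

theorem code_lt_code (a b : σ) {e' e : Ordinal.{0}} (h : e' < e) : S.code b e' < S.code a e :=
  calc S.base * e' + S.rank b < S.base * e' + S.base := add_lt_add_right (S.rank_lt_base b) _
    _ = S.base * (e' + 1) := (mul_add_one _ _).symm
    _ ≤ S.base * e := mul_le_mul_right (Order.add_one_le_of_lt h) _
    _ ≤ S.base * e + S.rank a := le_self_add

theorem lt_code {a : σ} (ha : 0 < S.rank a) (e : Ordinal.{0}) : e < S.code a e :=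
  (Ordinal.le_mul_right e (ha.trans (S.rank_lt_base a))).trans_lt (lt_add_of_pos_right _ ha)

theorem code_lt_code_of_rank_lt {a b : σ} (h : S.rank b < S.rank a) (e : Ordinal.{0}) :
    S.code b e < S.code a e :=
  add_lt_add_right h _

/-- The weight `w` of the paper, except that a leaf that is not a normal form weighs `1`: then a
projection that turns such a leaf into a normal form lowers the weight. -/
noncomputable def weight : FT σ → ℕ
  | .leaf c => if S.NF c then 0 else 1
  | .one a T => (if S.kdet a T.root then 0 else T.leafCount) + weight T
  | .two _ _ _ T₁ T₂ => T₁.leafCount + T₂.leafCount + weight T₁ + weight T₂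

noncomputable def nfCodes : FT σ → List Ordinal.{0}
  | .leaf c => if S.NF c then [0] else []
  | .one a T => (nfCodes T).map (S.code a)
  | .two _ _ a T₁ T₂ => (nfCodes T₁ ++ nfCodes T₂).map (S.code a)

theorem nfCodes_ne_nil : ∀ {R : FT σ}, R.HasLeaf S.NF → S.nfCodes R ≠ []
  | .leaf c, h => by simp [nfCodes, show S.NF c from h]
  | .one _ T, h => by simpa [nfCodes] using nfCodes_ne_nil (R := T) h
  | .two _ _ _ T₁ T₂, h => by
    rcases h with h | h
    · simp [nfCodes, nfCodes_ne_nil h]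
    · simp [nfCodes, nfCodes_ne_nil h]

noncomputable def measure (R : FT σ) : ℕ ×ₗ Ordinal.{0} :=
  toLex (S.weight R, (S.nfCodes R).headD 0)

theorem stepWeight_le {a t : σ} {T T' : FT σ} (hk : S.kdet a T.root → S.kdet t T'.root)
    (hn : T'.leafCount ≤ T.leafCount) :
    (if S.kdet t T'.root then 0 else T'.leafCount) ≤
      if S.kdet a T.root then 0 else T.leafCount := by
  split_ifs <;> simp_all

def DetBound (R' R : FT σ) : Prop :=
  R'.leafCount ≤ R.leafCount ∧ S.weight R' ≤ S.weight R ∧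
    (S.weight R' = S.weight R → List.Forall₂ (· < ·) (S.nfCodes R') (S.nfCodes R))

def BranchBound (R' R : FT σ) : Prop :=
  R'.leafCount ≤ R.leafCount ∧ S.weight R' ≤ S.weight R ∧
    (R.HasLeaf S.NF → S.weight R' < S.weight R)

variable {S}

theorem detBound_leaf {a : σ} (ha : ¬ S.NF a) (t : σ) : S.DetBound (.leaf t) (.leaf a) := by
  refine ⟨le_rfl, ?_, fun h => ?_⟩
  · simp only [weight, if_neg ha]
    split_ifs <;> omega
  · have ht : ¬ S.NF t := fun ht => by simp [weight, ht, ha] at h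
    simp only [nfCodes, if_neg ha, if_neg ht]
    exact .nil

theorem detBound_one_self (a : σ) (T : FT σ) : S.DetBound T (.one a T) := by
  refine ⟨le_rfl, by simp only [weight]; omega, fun h => ?_⟩
  have hk : S.kdet a T.root := by
    by_contra hk
    simp only [weight, if_neg hk] at h
    have := T.leafCount_pos
    omega
  simpa only [nfCodes, List.forall₂_map_right_iff, List.forall₂_same] using
    fun e _ => S.lt_code (pos_of_gt (S.rank_lt hk)) e

theorem DetBound.one_of_kdet {R T : FT σ} {a : σ} (h : S.DetBound R T) (hk : S.kdet a T.root) :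
    S.DetBound R (.one a T) := by
  obtain ⟨hn, hw, hL⟩ := h
  refine ⟨hn, by simpa only [weight, if_pos hk, zero_add] using hw, fun he => ?_⟩
  simp only [weight, if_pos hk, zero_add] at he
  simpa only [nfCodes, List.forall₂_map_right_iff] using
    (hL he).imp fun _ _ hlt => hlt.trans (S.lt_code (pos_of_gt (S.rank_lt hk)) _)

theorem detBound_one_of_rank_lt {a t : σ} {T : FT σ} (h : S.rank t < S.rank a)
    (hk : S.kdet a T.root → S.kdet t T.root) : S.DetBound (.one t T) (.one a T) := by
  have := S.stepWeight_le hk le_rfl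
  refine ⟨le_rfl, by simp only [weight]; omega, fun _ => ?_⟩
  simpa only [nfCodes, List.forall₂_map_left_iff, List.forall₂_map_right_iff, List.forall₂_same]
    using fun e _ => S.code_lt_code_of_rank_lt h e

theorem DetBound.one_one {a t : σ} {T T' : FT σ} (h : S.DetBound T' T)
    (hk : S.kdet a T.root → S.kdet t T'.root) : S.DetBound (.one t T') (.one a T) := by
  obtain ⟨hn, hw, hL⟩ := h
  have := S.stepWeight_le hk hn
  refine ⟨hn, by simp only [weight]; omega, fun he => ?_⟩
  simp only [weight] at he
  simpa only [nfCodes, List.forall₂_map_left_iff, List.forall₂_map_right_iff] using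
    (hL (by omega)).imp fun _ _ => S.code_lt_code a t

theorem DetBound.two_two {p q : ℝ} {a t : σ} {T₁ T₂ T₁' T₂' : FT σ} (h₁ : S.DetBound T₁' T₁)
    (h₂ : S.DetBound T₂' T₂) : S.DetBound (.two p q t T₁' T₂') (.two p q a T₁ T₂) := by
  obtain ⟨hn₁, hw₁, hL₁⟩ := h₁
  obtain ⟨hn₂, hw₂, hL₂⟩ := h₂
  refine ⟨by simp only [FT.leafCount]; omega, by simp only [weight]; omega, fun he => ?_⟩
  simp only [weight] at he
  simpa only [nfCodes, List.forall₂_map_left_iff, List.forall₂_map_right_iff] using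
    (List.rel_append (hL₁ (by omega)) (hL₂ (by omega))).imp fun _ _ => S.code_lt_code a t

theorem DetBound.measure_lt {R' R : FT σ} (h : S.DetBound R' R) (hR : R.HasLeaf S.NF) :
    S.measure R' < S.measure R := by
  obtain ⟨-, hw, hL⟩ := h
  rw [measure, measure, Prod.Lex.toLex_lt_toLex]
  rcases hw.lt_or_eq with hw | hw
  · exact Or.inl hw
  · have hne := S.nfCodes_ne_nil hR
    have hcodes := hL hw
    generalize S.nfCodes R' = l' at hcodes
    generalize S.nfCodes R = l at hcodes hne
    cases hcodes with
    | nil => exact absurd rfl hne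
    | cons hlt _ => exact Or.inr ⟨hw, hlt⟩

theorem branchBound_leaf {a : σ} (ha : ¬ S.NF a) (t : σ) : S.BranchBound (.leaf t) (.leaf a) := by
  refine ⟨le_rfl, ?_, fun h => absurd h ha⟩
  simp only [weight, if_neg ha]
  split_ifs <;> omega

theorem BranchBound.one_one {a t : σ} {T T' : FT σ} (h : S.BranchBound T' T)
    (hk : S.kdet a T.root → S.kdet t T'.root) : S.BranchBound (.one t T') (.one a T) := by
  obtain ⟨hn, hw, hlt⟩ := h
  have := S.stepWeight_le hk hn
  exact ⟨hn, by simp only [weight]; omega, fun hT => by have := hlt hT; simp only [weight]; omega⟩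

theorem branchBound_two_left (p q : ℝ) (a : σ) (T₁ T₂ : FT σ) :
    S.BranchBound T₁ (.two p q a T₁ T₂) := by
  have := T₂.leafCount_pos
  exact ⟨by simp only [FT.leafCount]; omega, by simp only [weight]; omega,
    fun _ => by simp only [weight]; omega⟩

theorem branchBound_two_right (p q : ℝ) (a : σ) (T₁ T₂ : FT σ) :
    S.BranchBound T₂ (.two p q a T₁ T₂) := by
  have := T₁.leafCount_pos
  exact ⟨by simp only [FT.leafCount]; omega, by simp only [weight]; omega,
    fun _ => by simp only [weight]; omega⟩

theorem BranchBound.two_two {p q p' q' : ℝ} {a t : σ} {T₁ T₂ T₁' T₂' : FT σ}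
    (h₁ : S.BranchBound T₁' T₁) (h₂ : S.BranchBound T₂' T₂) :
    S.BranchBound (.two p' q' t T₁' T₂') (.two p q a T₁ T₂) := by
  obtain ⟨hn₁, hw₁, hlt₁⟩ := h₁
  obtain ⟨hn₂, hw₂, hlt₂⟩ := h₂
  refine ⟨by simp only [FT.leafCount]; omega, by simp only [weight]; omega, fun hT => ?_⟩
  simp only [weight]
  rcases hT with hT | hT
  · have := hlt₁ hT; omega
  · have := hlt₂ hT; omega

theorem BranchBound.measure_lt {R' R : FT σ} (h : S.BranchBound R' R) (hR : R.HasLeaf S.NF) :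
    S.measure R' < S.measure R :=
  Prod.Lex.toLex_lt_toLex.2 (Or.inl (h.2.2 hR))

theorem exists_det_proj : ∀ {R : FT σ}, R.Valid S.det S.branch → ∀ {t : σ}, S.det R.root t →
    ∃ R' : FT σ, R'.Valid S.det S.branch ∧ R'.root = t ∧ R.Dominated S.NF R' ∧ S.DetBound R' R
  | .leaf a, _, t, hat => by
    have ha : ¬ S.NF a := fun h => h.1 t hat
    exact ⟨.leaf t, .leaf t, rfl, .of_not_hasLeaf ha fun _ hf => hf t, detBound_leaf ha t⟩
  | .one a T, .one hab hT, t, hat => by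
    rcases S.det_diamond hab hat with rfl | ⟨hk, hbt⟩ | ⟨hat', htb, hk⟩ | ⟨e, hbe, hte, hk⟩
    · exact ⟨T, hT, rfl, .refl T, detBound_one_self a T⟩
    · obtain ⟨R', hR', rfl, hdom, hR'T⟩ := exists_det_proj hT hbt
      exact ⟨R', hR', rfl, hdom, hR'T.one_of_kdet hk⟩
    · exact ⟨.one t T, .one htb hT, rfl, .refl T, detBound_one_of_rank_lt (S.rank_lt hat') hk⟩
    · obtain ⟨R', hR', hroot, hdom, hR'T⟩ := exists_det_proj hT hbe
      exact ⟨.one t R', .one (hroot ▸ hte) hR', rfl, hdom, hR'T.one_one (hroot ▸ hk)⟩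
  | .two p q a T₁ T₂, .two hb hT₁ hT₂, t, hat => by
    obtain ⟨b₁, b₂, hb', h₁, h₂, -⟩ := S.branch_det_diamond hat hb
    obtain ⟨R₁, hR₁, rfl, hdom₁, hR₁T⟩ := exists_det_proj hT₁ h₁
    obtain ⟨R₂, hR₂, rfl, hdom₂, hR₂T⟩ := exists_det_proj hT₂ h₂
    obtain ⟨hp, hq⟩ := S.branch_nonneg hb
    exact ⟨.two p q t R₁ R₂, .two hb' hR₁ hR₂, rfl, .two_mono hp hq a t hdom₁ hdom₂,
      hR₁T.two_two hR₂T⟩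

theorem exists_branch_proj : ∀ {R : FT σ}, R.Valid S.det S.branch →
    ∀ {s₀ s₁ : ℝ} {t₀ t₁ : σ}, S.branch R.root (s₀, t₀) (s₁, t₁) →
    ∃ R₀ R₁ : FT σ, R₀.Valid S.det S.branch ∧ R₁.Valid S.det S.branch ∧ R₀.root = t₀ ∧
      R₁.root = t₁ ∧ R.Dominated S.NF (.two s₀ s₁ R.root R₀ R₁) ∧
      S.BranchBound R₀ R ∧ S.BranchBound R₁ R
  | .leaf a, _, s₀, s₁, t₀, t₁, hbr => by
    have ha : ¬ S.NF a := fun h => h.2 _ _ hbr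
    obtain ⟨hs₀, hs₁⟩ := S.branch_nonneg hbr
    exact ⟨.leaf t₀, .leaf t₁, .leaf t₀, .leaf t₁, rfl, rfl,
      .of_not_hasLeaf ha fun _ hf => add_nonneg (mul_nonneg hs₀ (hf t₀)) (mul_nonneg hs₁ (hf t₁)),
      branchBound_leaf ha t₀, branchBound_leaf ha t₁⟩
  | .one a T, .one hab hT, s₀, s₁, t₀, t₁, hbr => by
    obtain ⟨c₀, c₁, hbr', h₀, h₁, hk⟩ := S.branch_det_diamond hab hbr
    obtain ⟨A₀, A₁, hA₀, hA₁, rfl, rfl, hdom, hA₀T, hA₁T⟩ := exists_branch_proj hT hbr'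
    exact ⟨.one t₀ A₀, .one t₁ A₁, .one h₀ hA₀, .one h₁ hA₁, rfl, rfl, hdom,
      hA₀T.one_one fun h => (hk h).1, hA₁T.one_one fun h => (hk h).2⟩
  | .two p q a T₁ T₂, .two hb hT₁ hT₂, s₀, s₁, t₀, t₁, hbr => by
    rcases S.branch_branch hb hbr with ⟨h₀, h₁⟩ | ⟨d, t, u, hb₀, hb₁, hc₀, hc₁, hprob⟩
    · obtain ⟨rfl, rfl⟩ := Prod.mk.inj h₀
      obtain ⟨rfl, rfl⟩ := Prod.mk.inj h₁
      exact ⟨T₁, T₂, hT₁, hT₂, rfl, rfl, .refl _, branchBound_two_left .., branchBound_two_right ..⟩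
    obtain ⟨A₀, A₁, hA₀, hA₁, hrA₀, hrA₁, hdomA, hA₀T, hA₁T⟩ := exists_branch_proj hT₁ hb₀
    obtain ⟨B₀, B₁, hB₀, hB₁, hrB₀, hrB₁, hdomB, hB₀T, hB₁T⟩ := exists_branch_proj hT₂ hb₁
    obtain ⟨hp, hq⟩ := S.branch_nonneg hb
    exact ⟨.two (u false false) (u true false) t₀ A₀ B₀,
      .two (u false true) (u true true) t₁ A₁ B₁,
      .two (hrA₀ ▸ hrB₀ ▸ hc₀) hA₀ hB₀, .two (hrA₁ ▸ hrB₁ ▸ hc₁) hA₁ hB₁, rfl, rfl,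
      (FT.Dominated.two_mono hp hq a a hdomA hdomB).trans (.interchange hprob ..),
      hA₀T.two_two hB₀T, hA₁T.two_two hB₁T⟩

theorem exists_subComp_dominated (R : FT σ) (hR : R.Valid S.det S.branch) (T : PT σ)
    (hT : T.Valid S.det S.branch) (hmax : T.Maximal S.NF) (hroot : T.label [] = some R.root) :
    ∃ G : FT σ, SubComp G T ∧ R.Dominated S.NF G := by
  induction R using (InvImage.wf S.measure wellFounded_lt).induction generalizing T with
  | _ R ih =>
  by_cases hNF : R.HasLeaf S.NF
  swap
  · exact ⟨.leaf R.root, .leaf hroot, .of_not_hasLeaf hNF fun _ hf => hf _⟩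
  rcases hT.root_cases hroot with hleaf | ⟨c, hpr, hc, hnone, hdet⟩ |
    ⟨p, q, d, e, hpr, hd, he, hbr⟩
  · rw [R.eq_leaf_of_isNF hR (hmax [] _ hroot hleaf)]
    exact ⟨_, .leaf hroot, .refl _⟩
  · obtain ⟨R', hR', rfl, hdom, hR'R⟩ := exists_det_proj hR hdet
    obtain ⟨G, hG, hdomG⟩ := ih R' (hR'R.measure_lt hNF) hR' (T.child false)
      (hT.child (by simp [hc])) (hmax.child false) hc
    exact ⟨.one R.root G, .one hroot hpr (by simp [hc]) hnone hG, hdom.trans hdomG⟩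
  · obtain ⟨R₀, R₁, hR₀, hR₁, rfl, rfl, hdom, hR₀R, hR₁R⟩ := exists_branch_proj hR hbr
    obtain ⟨G₀, hG₀, hdom₀⟩ := ih R₀ (hR₀R.measure_lt hNF) hR₀ (T.child false)
      (hT.child (by simp [hd])) (hmax.child false) hd
    obtain ⟨G₁, hG₁, hdom₁⟩ := ih R₁ (hR₁R.measure_lt hNF) hR₁ (T.child true)
      (hT.child (by simp [he])) (hmax.child true) he
    obtain ⟨hp, hq⟩ := S.branch_nonneg hbr
    exact ⟨.two p q R.root G₀ G₁, .two hroot hpr hG₀ hG₁,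
      hdom.trans (.two_mono hp hq _ _ hdom₀ hdom₁)⟩

end ConfluentPRS

/-- Simulation of finite computations by maximal ones: every finite probabilistic
computation with the same root as a maximal one is dominated by one of its finite
sub-computations. -/
theorem simulation
    (ndet kdet : σ → σ → Prop) (branch : σ → ℝ × σ → ℝ × σ → Prop)
    (hsum : ∀ a p b q c, branch a (p, b) (q, c) → 0 ≤ p ∧ 0 ≤ q ∧ p + q = 1)
    (hkk : ∀ a b c, kdet a b → kdet a c → b = c ∨ ∃ d, kdet b d ∧ kdet c d)
    (hkn : ∀ a b c, kdet a b → ndet a c → ndet b c ∨ ∃ d, ndet b d ∧ kdet c d)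
    (hkm : ∀ a b p c q d, kdet a b → branch a (p, c) (q, d) →
      ∃ c' d', branch b (p, c') (q, d') ∧ kdet c c' ∧ kdet d d')
    (hnn : ∀ a b c, ndet a b → ndet a c → b = c ∨ ∃ d, ndet b d ∧ ndet c d)
    (hnm : ∀ a b p c q d, ndet a b → branch a (p, c) (q, d) →
      ∃ c' d', branch b (p, c') (q, d') ∧ (ndet c c' ∨ kdet c c') ∧
        (ndet d d' ∨ kdet d d'))
    (hmm : ∀ a p₀ b₀ p₁ b₁ s₀ c₀ s₁ c₁,
      branch a (p₀, b₀) (p₁, b₁) → branch a (s₀, c₀) (s₁, c₁) →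
      ((p₀, b₀) = (s₀, c₀) ∧ (p₁, b₁) = (s₁, c₁)) ∨
      ∃ (d : Bool → Bool → σ) (t u : Bool → Bool → ℝ),
        branch b₀ (t false false, d false false) (t false true, d false true) ∧
        branch b₁ (t true false, d true false) (t true true, d true true) ∧
        branch c₀ (u false false, d false false) (u true false, d true false) ∧
        branch c₁ (u false true, d false true) (u true true, d true true) ∧
        ∀ i j, (bif i then p₁ else p₀) * t i j = (bif j then s₁ else s₀) * u i j)
    (hsn : ¬ ∃ f : ℕ → σ, ∀ n : ℕ, kdet (f n) (f (n + 1)))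
    (T : PT σ) (F : FT σ)
    (hv : T.Valid (fun a b => ndet a b ∨ kdet a b) branch)
    (hm : T.Maximal (IsNF (fun a b => ndet a b ∨ kdet a b) branch))
    (hvF : F.Valid (fun a b => ndet a b ∨ kdet a b) branch)
    (hroot : T.label [] = some F.root) :
    ∃ G : FT σ, SubComp G T ∧
      (∀ C, IsNF (fun a b => ndet a b ∨ kdet a b) branch C →
        FT.Pr C F ≤ FT.Pr C G ∧ FT.Nc C F ≤ FT.Nc C G) ∧
      FT.PrAny (IsNF (fun a b => ndet a b ∨ kdet a b) branch) F
        ≤ FT.PrAny (IsNF (fun a b => ndet a b ∨ kdet a b) branch) G ∧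
      FT.NAny (IsNF (fun a b => ndet a b ∨ kdet a b) branch) F
        ≤ FT.NAny (IsNF (fun a b => ndet a b ∨ kdet a b) branch) G := by
  have hwf : WellFounded (flip kdet) := ⟨fun a => by
    by_contra ha
    obtain ⟨f, -, hf⟩ := not_acc_iff_exists_descending_chain.1 ha
    exact hsn ⟨f, hf⟩⟩
  let S : ConfluentPRS σ :=
    { ndet, kdet, branch
      branch_nonneg := fun h => ⟨(hsum _ _ _ _ _ h).1, (hsum _ _ _ _ _ h).2.1⟩
      kdet_kdet := hkk _ _ _, kdet_ndet := hkn _ _ _, kdet_branch := hkm _ _ _ _ _ _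
      ndet_ndet := hnn _ _ _, ndet_branch := hnm _ _ _ _ _ _
      branch_branch := hmm _ _ _ _ _ _ _ _ _, kdet_wf := hwf }
  obtain ⟨G, hG, hdom⟩ := S.exists_subComp_dominated F hvF T hv hm hroot
  exact ⟨G, hG, fun C hC => ⟨hdom.pr_le hC, hdom.nc_le hC⟩, hdom.prAny_le, hdom.nAny_le⟩
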